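/- arXiv:2402.00512 — 2 statements merged into one kernel-verified Lean document; each statement's English description precedes it below -/
import Mathlib

section
/- Let d ≥ 1, let X₁,…,Xₙ be i.i.d. ℝ^d-valued random variables whose common law has density f with respect to Lebesgue measure, let H be an invertible d×d real matrix, let K : ℝ^d → ℝ be bounded, measurable and compactly supported, and let g : ℝ^d → ℝ be bounded and measurable. Then for every x ∈ ℝ^d, the variance of W₁ₙ(x) = (1/n) ∑_{i=1}^n K_H(X_i − x) g(X_i) satisfies Var(W₁ₙ(x)) ≤ (1/(n·|det H|)) ∫_{ℝ^d} K(p)² g(x + Hp)² f(x + Hp) dp. -/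
/-!
The summands `K_H(X_i - x) g(X_i)` are independent, identically distributed and bounded, so the
variance of their mean is `1/n` times the variance of one of them, which is at most its second
moment `∫ f(y) K_H(y - x)² g(y)² dy`. The substitution `y = x + H p` has Jacobian `|det H|` and
turns `K_H(y - x)²` into `|det H|⁻² K(p)²`, which leaves a single factor `|det H|⁻¹`.
-/

open MeasureTheory ProbabilityTheory

noncomputable section

def kernelScaled {d : ℕ} (H : Matrix (Fin d) (Fin d) ℝ) (K : (Fin d → ℝ) → ℝ)
    (v : Fin d → ℝ) : ℝ :=
  |H.det|⁻¹ * K (H⁻¹.mulVec v)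

theorem variance_mean_le_of_pairwise_indepFun {Ω ι : Type*} [MeasurableSpace Ω] {μ : Measure Ω}
    [IsProbabilityMeasure μ] [Fintype ι] {Y : ι → Ω → ℝ} (hY : ∀ i, MemLp (Y i) 2 μ)
    (hindep : Pairwise fun i j => IndepFun (Y i) (Y j) μ) {c : ℝ}
    (hc : ∀ i, ∫ ω, Y i ω ^ 2 ∂μ ≤ c) :
    variance (fun ω => (Fintype.card ι : ℝ)⁻¹ * ∑ i, Y i ω) μ ≤ (Fintype.card ι : ℝ)⁻¹ * c := by
  set N : ℝ := (Fintype.card ι : ℝ)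
  have hsum : ∑ i, variance (Y i) μ ≤ N * c := by
    calc ∑ i, variance (Y i) μ ≤ ∑ _i : ι, c := by
          refine Finset.sum_le_sum fun i _ => (variance_le_expectation_sq
            (hY i).aestronglyMeasurable).trans ?_
          simpa only [Pi.pow_apply] using hc i
      _ = N * c := by simp [N]
  calc variance (fun ω => N⁻¹ * ∑ i, Y i ω) μ = N⁻¹ ^ 2 * ∑ i, variance (Y i) μ := by
        rw [variance_const_mul, ← Finset.sum_fn, IndepFun.variance_sum (fun i _ => hY i)
          (fun i _ j _ hij => hindep hij)]
    _ ≤ N⁻¹ ^ 2 * (N * c) := by gcongr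
    _ = N⁻¹ * c := by
        -- also for `N = 0`, where both sides vanish
        have hN : N * N⁻¹ * N⁻¹ = N⁻¹ := by simpa only [inv_inv] using inv_mul_mul_self N⁻¹
        linear_combination c * hN

theorem integral_comp_eq_integral_density_smul {Ω α E : Type*} [MeasurableSpace Ω]
    [MeasurableSpace α] [NormedAddCommGroup E] [NormedSpace ℝ E] {μ : Measure Ω} {ν : Measure α}
    {X : Ω → α} (hX : AEMeasurable X μ) {f : α → ℝ} (hf : Measurable f) (hf₀ : ∀ y, 0 ≤ f y)
    (hlaw : μ.map X = ν.withDensity fun y => ENNReal.ofReal (f y)) {h : α → E}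
    (hh : StronglyMeasurable h) : ∫ ω, h (X ω) ∂μ = ∫ y, f y • h y ∂ν := by
  rw [← integral_map hX hh.aestronglyMeasurable, hlaw, integral_withDensity_eq_integral_toReal_smul
    hf.ennreal_ofReal (ae_of_all _ fun _ => ENNReal.ofReal_lt_top)]
  simp only [ENNReal.toReal_ofReal (hf₀ _)]

theorem Matrix.integral_comp_mulVec {ι E : Type*} [Fintype ι] [DecidableEq ι]
    [NormedAddCommGroup E] [NormedSpace ℝ E] {H : Matrix ι ι ℝ} (hH : H.det ≠ 0)
    (ψ : (ι → ℝ) → E) : ∫ p, ψ (H.mulVec p) = |H.det|⁻¹ • ∫ y, ψ y := by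
  have hemb : MeasurableEmbedding (Matrix.toLin' H) :=
    (LinearMap.equivOfDetNeZero (Matrix.toLin' H) (by rwa [LinearMap.det_toLin'])
      ).toContinuousLinearEquiv.toHomeomorph.measurableEmbedding
  change ∫ p, ψ (Matrix.toLin' H p) = _
  rw [← hemb.integral_map, Real.map_matrix_volume_pi_eq_smul_volume_pi hH, integral_smul_measure,
    ENNReal.toReal_ofReal (abs_nonneg _), abs_inv]

section KernelScaled

variable {d : ℕ} {K : (Fin d → ℝ) → ℝ}

theorem measurable_kernelScaled (H : Matrix (Fin d) (Fin d) ℝ) (hK : Measurable K) :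
    Measurable (kernelScaled H K) := by
  unfold kernelScaled
  fun_prop

theorem abs_kernelScaled_le (H : Matrix (Fin d) (Fin d) ℝ) {C : ℝ} (hK : ∀ u, |K u| ≤ C)
    (v : Fin d → ℝ) : |kernelScaled H K v| ≤ |H.det|⁻¹ * C := by
  rw [kernelScaled, abs_mul, abs_inv, abs_abs]
  gcongr
  exact hK _

theorem kernelScaled_mulVec {H : Matrix (Fin d) (Fin d) ℝ} (hH : H.det ≠ 0) (p : Fin d → ℝ) :
    kernelScaled H K (H.mulVec p) = |H.det|⁻¹ * K p := by
  rw [kernelScaled, Matrix.mulVec_mulVec, Matrix.nonsing_inv_mul H hH.isUnit, Matrix.one_mulVec]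

theorem integral_mul_sq_kernelScaled_mul {H : Matrix (Fin d) (Fin d) ℝ} (hH : H.det ≠ 0)
    (f g : (Fin d → ℝ) → ℝ) (x : Fin d → ℝ) :
    ∫ y, f y * (kernelScaled H K (y - x) * g y) ^ 2 =
      |H.det|⁻¹ * ∫ p, K p ^ 2 * g (x + H.mulVec p) ^ 2 * f (x + H.mulVec p) := by
  set ψ : (Fin d → ℝ) → ℝ := fun y => f y * (kernelScaled H K (y - x) * g y) ^ 2
  set I := ∫ p, K p ^ 2 * g (x + H.mulVec p) ^ 2 * f (x + H.mulVec p)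
  have hdet : |H.det| ≠ 0 := abs_ne_zero.2 hH
  have hsubst : ∫ p, ψ (x + H.mulVec p) = |H.det|⁻¹ * ∫ y, ψ y := by
    rw [Matrix.integral_comp_mulVec hH (fun z => ψ (x + z)), integral_add_left_eq_self,
      smul_eq_mul]
  have hψ : ∀ p, ψ (x + H.mulVec p) =
      (|H.det|⁻¹) ^ 2 * (K p ^ 2 * g (x + H.mulVec p) ^ 2 * f (x + H.mulVec p)) := fun p => by
    simp only [ψ, add_sub_cancel_left, kernelScaled_mulVec hH]
    ring
  calc ∫ y, ψ y = |H.det| * (|H.det|⁻¹ * ∫ y, ψ y) := by field_simp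
    _ = |H.det| * ((|H.det|⁻¹) ^ 2 * I) := by
        rw [← hsubst, integral_congr_ae (ae_of_all _ hψ), integral_const_mul]
    _ = |H.det|⁻¹ * I := by field_simp

end KernelScaled

theorem variance_W1n_general {d n : ℕ}
    {Ω : Type*} [MeasurableSpace Ω] (μ : Measure Ω) [IsProbabilityMeasure μ]
    (X : Fin n → Ω → (Fin d → ℝ)) (hXmeas : ∀ i, Measurable (X i))
    (hindep : iIndepFun X μ)
    (f : (Fin d → ℝ) → ℝ) (hfmeas : Measurable f) (hfnonneg : ∀ y, 0 ≤ f y)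
    (hlaw : ∀ i, μ.map (X i) = volume.withDensity (fun y => ENNReal.ofReal (f y)))
    (H : Matrix (Fin d) (Fin d) ℝ) (hH : H.det ≠ 0)
    (K : (Fin d → ℝ) → ℝ) (hKmeas : Measurable K) (hKbd : ∃ C, ∀ u, |K u| ≤ C)
    (g : (Fin d → ℝ) → ℝ) (hgmeas : Measurable g) (hgbd : ∃ C, ∀ u, |g u| ≤ C)
    (x : Fin d → ℝ) :
    variance (fun ω => (n : ℝ)⁻¹ * ∑ i, kernelScaled H K (X i ω - x) * g (X i ω)) μ ≤
      ((n : ℝ) * |H.det|)⁻¹ *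
        ∫ p, (K p) ^ 2 * (g (x + H.mulVec p)) ^ 2 * f (x + H.mulVec p) := by
  obtain ⟨CK, hCK⟩ := hKbd
  obtain ⟨Cg, hCg⟩ := hgbd
  set φ : (Fin d → ℝ) → ℝ := fun y => kernelScaled H K (y - x) * g y
  have hφ : Measurable φ :=
    ((measurable_kernelScaled H hKmeas).comp (measurable_id.sub_const x)).mul hgmeas
  have hφ_bdd : ∀ y, ‖φ y‖ ≤ |H.det|⁻¹ * CK * Cg := fun y => by
    rw [Real.norm_eq_abs, abs_mul]
    exact mul_le_mul (abs_kernelScaled_le H hCK _) (hCg _) (abs_nonneg _)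
      ((abs_nonneg _).trans (abs_kernelScaled_le H hCK (y - x)))
  have hY : ∀ i, MemLp (fun ω => φ (X i ω)) 2 μ := fun i =>
    .of_bound (hφ.comp (hXmeas i)).aestronglyMeasurable _ (ae_of_all _ fun _ => hφ_bdd _)
  have hmoment : ∀ i, ∫ ω, φ (X i ω) ^ 2 ∂μ =
      |H.det|⁻¹ * ∫ p, K p ^ 2 * g (x + H.mulVec p) ^ 2 * f (x + H.mulVec p) := fun i => by
    rw [integral_comp_eq_integral_density_smul (hXmeas i).aemeasurable hfmeas hfnonneg (hlaw i)
      (hφ.pow_const 2).stronglyMeasurable]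
    exact integral_mul_sq_kernelScaled_mul hH f g x
  rw [mul_inv, mul_assoc]
  simpa only [Fintype.card_fin] using variance_mean_le_of_pairwise_indepFun hY
    (fun i j hij => (hindep.comp _ fun _ => hφ).indepFun hij) (fun i => (hmoment i).le)

/-- Variance bound in Lemma 1:
`Var(W₁ₙ(x)) ≤ (1/(n |det H|)) ∫ K(p)² g(x + Hp)² f(x + Hp) dp`. -/
theorem variance_W1n {d n : ℕ} (hd : 1 ≤ d) (hn : 1 ≤ n)
    {Ω : Type*} [MeasurableSpace Ω] (μ : Measure Ω) [IsProbabilityMeasure μ]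
    (X : Fin n → Ω → (Fin d → ℝ)) (hXmeas : ∀ i, Measurable (X i))
    (hindep : iIndepFun X μ)
    (f : (Fin d → ℝ) → ℝ) (hfmeas : Measurable f) (hfnonneg : ∀ y, 0 ≤ f y)
    (hlaw : ∀ i, μ.map (X i) = volume.withDensity (fun y => ENNReal.ofReal (f y)))
    (H : Matrix (Fin d) (Fin d) ℝ) (hH : H.det ≠ 0)
    (K : (Fin d → ℝ) → ℝ) (hKmeas : Measurable K) (hKbd : ∃ C, ∀ u, |K u| ≤ C)
    (hKsupp : HasCompactSupport K)
    (g : (Fin d → ℝ) → ℝ) (hgmeas : Measurable g) (hgbd : ∃ C, ∀ u, |g u| ≤ C)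
    (x : Fin d → ℝ) :
    variance (fun ω => (n : ℝ)⁻¹ * ∑ i, kernelScaled H K (X i ω - x) * g (X i ω)) μ ≤
      ((n : ℝ) * |H.det|)⁻¹ *
        ∫ p, (K p) ^ 2 * (g (x + H.mulVec p)) ^ 2 * f (x + H.mulVec p) :=
  variance_W1n_general μ X hXmeas hindep f hfmeas hfnonneg hlaw H hH K hKmeas hKbd g hgmeas hgbd x
end
end

section
/- Let d ≥ 1, let X be an ℝ^d-valued random variable whose law has density f with respect to Lebesgue measure, let H be an invertible d×d real matrix, and let K : ℝ^d → ℝ be bounded, measurable and compactly supported. Then for all x, t ∈ ℝ^d, |det H| · E[K_H(X − x) · K_H(X − t)] = ∫_{ℝ^d} K(p) · K(p − H⁻¹(x − t)) · f(t + Hp) dp. -/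
open MeasureTheory ProbabilityTheory Filter
open scoped ENNReal NNReal Topology

noncomputable section

/-- Expectation computation in Lemma 2:
`|det H| · E[K_H(X − x) K_H(X − t)] = ∫ K(p) K(p − H⁻¹(x − t)) f(t + Hp) dp`. -/
theorem expectation_W2n {d : ℕ} (hd : 1 ≤ d)
    {Ω : Type*} [MeasurableSpace Ω] (μ : Measure Ω) [IsProbabilityMeasure μ]
    (X : Ω → (Fin d → ℝ)) (hXmeas : Measurable X)
    (f : (Fin d → ℝ) → ℝ) (hfmeas : Measurable f) (hfnonneg : ∀ y, 0 ≤ f y)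
    (hlaw : μ.map X = volume.withDensity (fun y => ENNReal.ofReal (f y)))
    (H : Matrix (Fin d) (Fin d) ℝ) (hH : H.det ≠ 0)
    (K : (Fin d → ℝ) → ℝ) (hKmeas : Measurable K) (hKbd : ∃ C, ∀ u, |K u| ≤ C)
    (hKsupp : HasCompactSupport K)
    (x t : Fin d → ℝ) :
    |H.det| * ∫ ω, kernelScaled H K (X ω - x) * kernelScaled H K (X ω - t) ∂μ =
      ∫ p, K p * K (p - H⁻¹.mulVec (x - t)) * f (t + H.mulVec p) := by
  have hmv : ∀ (M : Matrix (Fin d) (Fin d) ℝ), Measurable fun v : Fin d → ℝ => M.mulVec v := by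
    intro M
    have : (fun v : Fin d → ℝ => M.mulVec v) = ⇑(Matrix.toLin' M) := by
      funext v; simp [Matrix.toLin'_apply]
    rw [this]
    exact (Matrix.toLin' M).continuous_of_finiteDimensional.measurable
  have hK2 : Measurable fun y : Fin d → ℝ =>
      kernelScaled H K (y - x) * kernelScaled H K (y - t) := by
    unfold kernelScaled
    exact (measurable_const.mul
        (hKmeas.comp ((hmv H⁻¹).comp (measurable_id.sub measurable_const)))).mul
      (measurable_const.mul
        (hKmeas.comp ((hmv H⁻¹).comp (measurable_id.sub measurable_const))))
  -- Step 1: push forward to the law of X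
  have h1 : (∫ ω, kernelScaled H K (X ω - x) * kernelScaled H K (X ω - t) ∂μ)
      = ∫ y, (kernelScaled H K (y - x) * kernelScaled H K (y - t)) * f y := by
    rw [← integral_map hXmeas.aemeasurable (hK2.aestronglyMeasurable), hlaw]
    have : (fun y : Fin d → ℝ => ENNReal.ofReal (f y))
        = fun y => ((Real.toNNReal (f y) : ℝ≥0) : ℝ≥0∞) := rfl
    rw [this, integral_withDensity_eq_integral_smul
      (f := fun y => Real.toNNReal (f y)) hfmeas.real_toNNReal]
    congr 1
    funext y
    rw [NNReal.smul_def, Real.coe_toNNReal _ (hfnonneg y), smul_eq_mul, mul_comm]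
  -- Step 2: translation invariance
  set F : (Fin d → ℝ) → ℝ :=
    fun y => (kernelScaled H K (y - x) * kernelScaled H K (y - t)) * f y with hF
  have hFmeas : Measurable F := hK2.mul hfmeas
  have h2 : (∫ y, F y) = ∫ y, F (t + y) := (integral_add_left_eq_self F t).symm
  -- Step 3: linear change of variables y = H p
  have h3 : (∫ y, F (t + y)) = |H.det| * ∫ p, F (t + H.mulVec p) := by
    have hmap := Real.map_matrix_volume_pi_eq_smul_volume_pi (M := H) hH
    have hint : (∫ y, F (t + y) ∂(Measure.map (⇑(Matrix.toLin' H)) volume))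
        = ∫ p, F (t + H.mulVec p) := by
      rw [integral_map (f := fun y => F (t + y))
        ((Matrix.toLin' H).continuous_of_finiteDimensional.measurable.aemeasurable)
        (Measurable.aestronglyMeasurable (by fun_prop))]
      simp [Matrix.toLin'_apply]
    rw [← hint, hmap, integral_smul_measure]
    simp only [ENNReal.toReal_ofReal (abs_nonneg _)]
    rw [smul_eq_mul, ← mul_assoc, abs_inv, mul_inv_cancel₀ (abs_ne_zero.2 hH), one_mul]
  -- Step 4: simplify the integrand
  have h4 : ∀ p, F (t + H.mulVec p)
      = (|H.det|⁻¹ * |H.det|⁻¹) * (K p * K (p - H⁻¹.mulVec (x - t)) * f (t + H.mulVec p)) := by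
    intro p
    have hinv : H⁻¹.mulVec (H.mulVec p) = p := by
      rw [Matrix.mulVec_mulVec, Matrix.nonsing_inv_mul H (isUnit_iff_ne_zero.mpr hH),
        Matrix.one_mulVec]
    have e1 : H⁻¹.mulVec (t + H.mulVec p - x) = p - H⁻¹.mulVec (x - t) := by
      have h' : t + H.mulVec p - x = H.mulVec p - (x - t) := by abel
      rw [h', Matrix.mulVec_sub, hinv]
    have e2 : H⁻¹.mulVec (t + H.mulVec p - t) = p := by
      rw [add_sub_cancel_left, hinv]
    simp only [hF, kernelScaled, e1, e2]
    ring
  rw [h1, h2, h3, ← mul_assoc]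
  simp_rw [h4]
  rw [integral_const_mul, ← mul_assoc]
  have hone : |H.det| * |H.det| * (|H.det|⁻¹ * |H.det|⁻¹) = 1 := by
    field_simp
  rw [hone, one_mul]
end
end
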